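/- Let N ≥ 2, let η ≥ 0 and ζ ∈ ℝ, and let F be the BCD-type prepotential with parameters (η, ζ) and with Λ = e^{(6(N−1+η)+4ζ)/(4(N−1+η))} on the cone C = {x ∈ ℝ^N : x_1 > ⋯ > x_N > 0}. Then at every point of C its Hessian entries T_ij = ∂²F/∂x_i∂x_j satisfy, for all 1 ≤ i < j ≤ N: e^{T_ii − T_jj} = [coth(T_ij/2)]^{2η+N−2} · (∏_{n≠j} sinh(T_jn)) / (∏_{m≠i} sinh(T_im)), where coth(T_ij/2) = x_i/x_j > 0 and [·]^{2η+N−2} denotes the real power. -/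

import Mathlib

open Real Finset

/-- Partial derivative in the `i`-th coordinate direction. -/
noncomputable def pd {N : ℕ} (i : Fin N) (f : (Fin N → ℝ) → ℝ) : (Fin N → ℝ) → ℝ :=
  fun x => fderiv ℝ f x (Pi.single i 1)

/-- Hessian entry `T_ij = ∂²f/∂x_i∂x_j`. -/
noncomputable def hess {N : ℕ} (f : (Fin N → ℝ) → ℝ) (i j : Fin N) : (Fin N → ℝ) → ℝ :=
  pd i (pd j f)

/-- The open cone `x₁ > x₂ > ⋯ > x_N > 0`. -/
def cone (N : ℕ) : Set (Fin N → ℝ) := {x | StrictAnti x ∧ ∀ i, 0 < x i}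

/-- The BCD-type prepotential with parameters `η, ζ` and cut-off `Λ`. -/
noncomputable def FBCD (N : ℕ) (η ζ Λ : ℝ) (x : Fin N → ℝ) : ℝ :=
  (1/2) * ∑ i : Fin N, ∑ j : Fin N,
      (if i < j then (x i - x j)^2 * Real.log ((x i - x j)/Λ)
                      + (x i + x j)^2 * Real.log ((x i + x j)/Λ) else 0)
  + η * ∑ i : Fin N, (x i)^2 * Real.log (x i / Λ)
  + ζ * ∑ i : Fin N, (x i)^2

/-- The hyperbolic cotangent. -/
noncomputable def coth (t : ℝ) : ℝ := Real.cosh t / Real.sinh t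

lemma isOpen_cone (N : ℕ) : IsOpen (cone N) := by
  have : cone N = (⋂ p : Fin N × Fin N, {x : Fin N → ℝ | p.1 < p.2 → x p.2 < x p.1})
      ∩ ⋂ i : Fin N, {x : Fin N → ℝ | 0 < x i} := by
    ext x
    simp only [cone, Set.mem_setOf_eq, Set.mem_inter_iff, Set.mem_iInter, StrictAnti]
    constructor
    · rintro ⟨h1, h2⟩; exact ⟨fun p hp => h1 hp, h2⟩
    · rintro ⟨h1, h2⟩; exact ⟨fun a b hab => h1 (a, b) hab, h2⟩
  rw [this]
  refine (isOpen_iInter_of_finite fun p => ?_).inter (isOpen_iInter_of_finite fun i => ?_)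
  · by_cases hp : p.1 < p.2
    · simp only [hp, forall_true_left]
      exact isOpen_lt (continuous_apply p.2) (continuous_apply p.1)
    · have : {x : Fin N → ℝ | p.1 < p.2 → x p.2 < x p.1} = Set.univ := by
        ext x; simp [hp]
      rw [this]; exact isOpen_univ
  · exact isOpen_lt continuous_const (continuous_apply i)

lemma hasDerivAt_logdiv {Λ u : ℝ} (hΛ : Λ ≠ 0) (hu : u ≠ 0) :
    HasDerivAt (fun u : ℝ => Real.log (u/Λ)) u⁻¹ u := by
  have h2 : HasDerivAt (fun u : ℝ => u / Λ) (1/Λ) u := (hasDerivAt_id u).div_const Λ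
  have h := (Real.hasDerivAt_log (div_ne_zero hu hΛ)).comp u h2
  refine h.congr_deriv ?_
  field_simp

lemma hasDerivAt_phi {Λ u : ℝ} (hΛ : Λ ≠ 0) (hu : u ≠ 0) :
    HasDerivAt (fun u : ℝ => u^2 * Real.log (u/Λ)) (2*u*Real.log (u/Λ) + u) u := by
  have h := (hasDerivAt_pow 2 u).mul (hasDerivAt_logdiv hΛ hu)
  refine h.congr_deriv ?_
  field_simp
  ring

lemma hasDerivAt_psi {Λ u : ℝ} (hΛ : Λ ≠ 0) (hu : u ≠ 0) :
    HasDerivAt (fun u : ℝ => 2*u*Real.log (u/Λ) + u) (2*Real.log (u/Λ) + 3) u := by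
  have h := ((((hasDerivAt_id u).const_mul 2).mul (hasDerivAt_logdiv hΛ hu)).add (hasDerivAt_id u))
  refine h.congr_deriv ?_
  field_simp
  simp only [id]; ring

noncomputable abbrev pr {N : ℕ} (i : Fin N) : (Fin N → ℝ) →L[ℝ] ℝ :=
  ContinuousLinearMap.proj i

def dd {N : ℕ} (k i : Fin N) : ℝ := if i = k then 1 else 0

noncomputable def Gfun {N : ℕ} (η ζ Λ : ℝ) (k : Fin N) (y : Fin N → ℝ) : ℝ :=
  (1/2) * ∑ i : Fin N, ∑ j : Fin N,
    (if i < j then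
      (2*(y i - y j)*Real.log ((y i - y j)/Λ) + (y i - y j)) * (dd k i - dd k j)
    + (2*(y i + y j)*Real.log ((y i + y j)/Λ) + (y i + y j)) * (dd k i + dd k j)
    else 0)
  + η * (2*(y k)*Real.log (y k/Λ) + y k)
  + ζ * (2 * y k)

section
variable {N : ℕ} {η ζ Λ : ℝ}

lemma cone_sub_pos {x : Fin N → ℝ} (hx : x ∈ cone N) {i j : Fin N} (hij : i < j) :
    0 < x i - x j := sub_pos.2 (hx.1 hij)

lemma cone_add_pos {x : Fin N → ℝ} (hx : x ∈ cone N) (i j : Fin N) :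
    0 < x i + x j := add_pos (hx.2 i) (hx.2 j)

lemma hasFDerivAt_FBCD (hΛ : Λ ≠ 0) {y : Fin N → ℝ} (hy : y ∈ cone N) :
    HasFDerivAt (FBCD N η ζ Λ)
      ((1/2 : ℝ) • (∑ i : Fin N, ∑ j : Fin N,
          (if i < j then
            (2*(y i - y j)*Real.log ((y i - y j)/Λ) + (y i - y j)) • (pr i - pr j)
          + (2*(y i + y j)*Real.log ((y i + y j)/Λ) + (y i + y j)) • (pr i + pr j)
          else 0))
        + η • (∑ i : Fin N, (2*(y i)*Real.log (y i/Λ) + y i) • pr i)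
        + ζ • (∑ i : Fin N, (2 * y i) • pr i)) y := by
  refine (HasFDerivAt.add (HasFDerivAt.add ?_ ?_) ?_)
  · refine HasFDerivAt.const_mul (HasFDerivAt.fun_sum fun i _ => HasFDerivAt.fun_sum fun j _ => ?_) _
    by_cases hij : i < j
    · simp only [if_pos hij]
      have hm : HasFDerivAt (fun y : Fin N → ℝ => y i - y j) (pr i - pr j) y :=
        (hasFDerivAt_apply i y).sub (hasFDerivAt_apply j y)
      have hp : HasFDerivAt (fun y : Fin N → ℝ => y i + y j) (pr i + pr j) y :=
        (hasFDerivAt_apply i y).add (hasFDerivAt_apply j y)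
      exact ((hasDerivAt_phi hΛ (ne_of_gt (cone_sub_pos hy hij))).comp_hasFDerivAt y hm).add
        ((hasDerivAt_phi hΛ (ne_of_gt (cone_add_pos hy i j))).comp_hasFDerivAt y hp)
    · simp only [if_neg hij]
      exact hasFDerivAt_const 0 y
  · refine HasFDerivAt.const_mul (HasFDerivAt.fun_sum fun i _ => ?_) _
    exact (hasDerivAt_phi hΛ (ne_of_gt (hy.2 i))).comp_hasFDerivAt y (hasFDerivAt_apply i y : HasFDerivAt (fun y : Fin N → ℝ => y i) (pr i) y)
  · refine HasFDerivAt.const_mul (HasFDerivAt.fun_sum fun i _ => ?_) _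
    have : HasDerivAt (fun u : ℝ => u^2) (2 * y i) (y i) := by
      simpa using hasDerivAt_pow 2 (y i)
    exact this.comp_hasFDerivAt y (hasFDerivAt_apply i y : HasFDerivAt (fun y : Fin N → ℝ => y i) (pr i) y)

lemma pd_FBCD (hΛ : Λ ≠ 0) {y : Fin N → ℝ} (hy : y ∈ cone N) (k : Fin N) :
    pd k (FBCD N η ζ Λ) y = Gfun η ζ Λ k y := by
  rw [pd, (hasFDerivAt_FBCD hΛ hy).fderiv]
  simp only [ContinuousLinearMap.add_apply, ContinuousLinearMap.smul_apply,
    ContinuousLinearMap.sum_apply, apply_ite (fun L : (Fin N → ℝ) →L[ℝ] ℝ => L (Pi.single k 1)),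
    ContinuousLinearMap.zero_apply, ContinuousLinearMap.sub_apply, ContinuousLinearMap.proj_apply,
    Pi.single_apply, smul_eq_mul, Gfun, dd, mul_ite, mul_one, mul_zero, Finset.sum_ite_eq']
  simp
end

section
variable {N : ℕ} {η ζ Λ : ℝ}

lemma hasFDerivAt_Gfun (hΛ : Λ ≠ 0) {x : Fin N → ℝ} (hx : x ∈ cone N) (k : Fin N) :
    HasFDerivAt (Gfun η ζ Λ k)
      ((1/2 : ℝ) • (∑ i : Fin N, ∑ j : Fin N,
          (if i < j then
            (dd k i - dd k j) • ((2*Real.log ((x i - x j)/Λ) + 3) • (pr i - pr j))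
          + (dd k i + dd k j) • ((2*Real.log ((x i + x j)/Λ) + 3) • (pr i + pr j))
          else 0))
        + η • ((2*Real.log (x k/Λ) + 3) • pr k)
        + ζ • ((2:ℝ) • pr k)) x := by
  refine (HasFDerivAt.add (HasFDerivAt.add ?_ ?_) ?_)
  · refine HasFDerivAt.const_mul (HasFDerivAt.fun_sum fun i _ => HasFDerivAt.fun_sum fun j _ => ?_) _
    by_cases hij : i < j
    · simp only [if_pos hij]
      have hm : HasFDerivAt (fun y : Fin N → ℝ => y i - y j) (pr i - pr j) x :=
        (hasFDerivAt_apply i x).sub (hasFDerivAt_apply j x)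
      have hp : HasFDerivAt (fun y : Fin N → ℝ => y i + y j) (pr i + pr j) x :=
        (hasFDerivAt_apply i x).add (hasFDerivAt_apply j x)
      exact (((hasDerivAt_psi hΛ (ne_of_gt (cone_sub_pos hx hij))).comp_hasFDerivAt x hm).mul_const
          _).add
        (((hasDerivAt_psi hΛ (ne_of_gt (cone_add_pos hx i j))).comp_hasFDerivAt x hp).mul_const _)
    · simp only [if_neg hij]
      exact hasFDerivAt_const 0 x
  · exact HasFDerivAt.const_mul
      ((hasDerivAt_psi hΛ (ne_of_gt (hx.2 k))).comp_hasFDerivAt x (hasFDerivAt_apply k x : HasFDerivAt (fun y : Fin N → ℝ => y k) (pr k) x)) _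
  · exact HasFDerivAt.const_mul ((hasFDerivAt_apply k x).const_mul 2) _

lemma hess_FBCD (hΛ : Λ ≠ 0) {x : Fin N → ℝ} (hx : x ∈ cone N) (i0 k : Fin N) :
    hess (FBCD N η ζ Λ) i0 k x =
      (1/2) * ∑ i : Fin N, ∑ j : Fin N,
        (if i < j then
          (2*Real.log ((x i - x j)/Λ) + 3) * ((dd k i - dd k j) * (dd i0 i - dd i0 j))
        + (2*Real.log ((x i + x j)/Λ) + 3) * ((dd k i + dd k j) * (dd i0 i + dd i0 j))
        else 0)
      + η * ((2*Real.log (x k/Λ) + 3) * dd i0 k)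
      + ζ * (2 * dd i0 k) := by
  have hev : pd k (FBCD N η ζ Λ) =ᶠ[nhds x] Gfun η ζ Λ k :=
    Filter.eventuallyEq_of_mem ((isOpen_cone N).mem_nhds hx) fun y hy => pd_FBCD hΛ hy k
  rw [hess, pd, hev.fderiv_eq, (hasFDerivAt_Gfun hΛ hx k).fderiv]
  simp only [ContinuousLinearMap.add_apply, ContinuousLinearMap.smul_apply,
    ContinuousLinearMap.sum_apply, apply_ite (fun L : (Fin N → ℝ) →L[ℝ] ℝ => L (Pi.single i0 1)),
    ContinuousLinearMap.zero_apply, ContinuousLinearMap.sub_apply, ContinuousLinearMap.proj_apply,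
    Pi.single_apply, smul_eq_mul]
  simp only [dd]
  have hsum : ∀ f g : Fin N → Fin N → ℝ, (∀ i j, f i j = g i j) →
      (∑ i : Fin N, ∑ j : Fin N, f i j) = ∑ i : Fin N, ∑ j : Fin N, g i j :=
    fun f g h => Finset.sum_congr rfl fun i _ => Finset.sum_congr rfl fun j _ => h i j
  rw [hsum _ (fun i j => if i < j then
          (2*Real.log ((x i - x j)/Λ) + 3) *
            (((if i = k then (1:ℝ) else 0) - if j = k then 1 else 0) *
             ((if i = i0 then (1:ℝ) else 0) - if j = i0 then 1 else 0)) +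
          (2*Real.log ((x i + x j)/Λ) + 3) *
            (((if i = k then (1:ℝ) else 0) + if j = k then 1 else 0) *
             ((if i = i0 then (1:ℝ) else 0) + if j = i0 then 1 else 0))
        else 0) ?_]
  intro i j
  by_cases hij : i < j
  · simp only [if_pos hij]; ring
  · simp only [if_neg hij]
end

section
variable {N : ℕ} {η ζ Λ : ℝ}

lemma dd_self (k : Fin N) : dd k k = 1 := if_pos rfl
lemma dd_ne {k i : Fin N} (h : i ≠ k) : dd k i = 0 := if_neg h

lemma delta_zero {a b i j : Fin N} (hab : a < b) (hij : i < j) (hne : ¬(i = a ∧ j = b)) :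
    (dd b i - dd b j) * (dd a i - dd a j) = 0 ∧ (dd b i + dd b j) * (dd a i + dd a j) = 0 := by
  by_cases h1 : i = b
  · subst h1
    rw [dd_self, dd_ne (ne_of_gt hij), dd_ne (ne_of_gt (hab.trans hij)), dd_ne hab.ne']
    norm_num
  · by_cases h2 : j = a
    · subst h2
      rw [dd_ne h1, dd_ne hab.ne, dd_ne hij.ne, dd_self]
      norm_num
    · by_cases h3 : i = a
      · have hjb : j ≠ b := fun hjb => hne ⟨h3, hjb⟩
        rw [dd_ne h1, dd_ne hjb]
        norm_num
      · by_cases h4 : j = b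
        · rw [dd_ne h3, dd_ne h2]
          norm_num
        · rw [dd_ne h1, dd_ne h4]
          norm_num

lemma sum_offdiag {a b : Fin N} (hab : a < b) (c1 c2 : Fin N → Fin N → ℝ) :
    (∑ i : Fin N, ∑ j : Fin N, (if i < j then
      c1 i j * ((dd b i - dd b j) * (dd a i - dd a j))
    + c2 i j * ((dd b i + dd b j) * (dd a i + dd a j)) else 0))
    = -(c1 a b) + c2 a b := by
  rw [Finset.sum_eq_single a]
  · rw [Finset.sum_eq_single b]
    · rw [if_pos hab, dd_ne hab.ne, dd_self, dd_self, dd_ne hab.ne']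
      ring
    · intro j _ hj
      by_cases hij : a < j
      · rw [if_pos hij, (delta_zero hab hij (fun h => hj h.2)).1,
          (delta_zero hab hij (fun h => hj h.2)).2, mul_zero, mul_zero, add_zero]
      · rw [if_neg hij]
    · exact fun h => absurd (Finset.mem_univ b) h
  · intro i _ hi
    refine Finset.sum_eq_zero fun j _ => ?_
    by_cases hij : i < j
    · rw [if_pos hij, (delta_zero hab hij (fun h => hi h.1)).1,
        (delta_zero hab hij (fun h => hi h.1)).2, mul_zero, mul_zero, add_zero]
    · rw [if_neg hij]
  · exact fun h => absurd (Finset.mem_univ a) h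

lemma hess_ab (hΛ : Λ ≠ 0) {x : Fin N → ℝ} (hx : x ∈ cone N) {a b : Fin N} (hab : a < b) :
    hess (FBCD N η ζ Λ) a b x
      = Real.log ((x a + x b)/Λ) - Real.log ((x a - x b)/Λ) := by
  rw [hess_FBCD hΛ hx a b, sum_offdiag hab, dd_ne hab.ne']
  ring

lemma hess_ba (hΛ : Λ ≠ 0) {x : Fin N → ℝ} (hx : x ∈ cone N) {a b : Fin N} (hab : a < b) :
    hess (FBCD N η ζ Λ) b a x
      = Real.log ((x a + x b)/Λ) - Real.log ((x a - x b)/Λ) := by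
  rw [hess_FBCD hΛ hx b a]
  have hc : (∑ i : Fin N, ∑ j : Fin N, (if i < j then
      (2*Real.log ((x i - x j)/Λ) + 3) * ((dd a i - dd a j) * (dd b i - dd b j))
    + (2*Real.log ((x i + x j)/Λ) + 3) * ((dd a i + dd a j) * (dd b i + dd b j)) else 0))
      = (∑ i : Fin N, ∑ j : Fin N, (if i < j then
      (2*Real.log ((x i - x j)/Λ) + 3) * ((dd b i - dd b j) * (dd a i - dd a j))
    + (2*Real.log ((x i + x j)/Λ) + 3) * ((dd b i + dd b j) * (dd a i + dd a j)) else 0)) := by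
    refine Finset.sum_congr rfl fun i _ => Finset.sum_congr rfl fun j _ => ?_
    by_cases hij : i < j
    · rw [if_pos hij, if_pos hij]; ring
    · rw [if_neg hij, if_neg hij]
  rw [hc, sum_offdiag hab, dd_ne hab.ne]
  ring

lemma sum_diag (k : Fin N) (c1 c2 : Fin N → Fin N → ℝ) :
    (∑ i : Fin N, ∑ j : Fin N, (if i < j then
      c1 i j * ((dd k i - dd k j) * (dd k i - dd k j))
    + c2 i j * ((dd k i + dd k j) * (dd k i + dd k j)) else 0))
    = ∑ m ∈ Finset.univ.erase k,
        ((if k < m then c1 k m + c2 k m else 0) + (if m < k then c1 m k + c2 m k else 0)) := by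
  have hsplit := (Finset.add_sum_erase Finset.univ
    (fun i => ∑ j : Fin N, (if i < j then
      c1 i j * ((dd k i - dd k j) * (dd k i - dd k j))
    + c2 i j * ((dd k i + dd k j) * (dd k i + dd k j)) else 0)) (Finset.mem_univ k)).symm
  rw [hsplit, Finset.sum_add_distrib]
  congr 1
  · -- ∑_j t k j = ∑_{m ∈ erase k} (if k < m then ... else 0)
    have h1 : ∀ j : Fin N, (if k < j then
        c1 k j * ((dd k k - dd k j) * (dd k k - dd k j))
      + c2 k j * ((dd k k + dd k j) * (dd k k + dd k j)) else 0)
        = (if k < j then c1 k j + c2 k j else 0) := by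
      intro j
      by_cases hkj : k < j
      · rw [if_pos hkj, if_pos hkj, dd_self, dd_ne (ne_of_gt hkj)]; ring
      · rw [if_neg hkj, if_neg hkj]
    calc (∑ j : Fin N, (if k < j then
        c1 k j * ((dd k k - dd k j) * (dd k k - dd k j))
      + c2 k j * ((dd k k + dd k j) * (dd k k + dd k j)) else 0))
        = ∑ j : Fin N, (if k < j then c1 k j + c2 k j else 0) :=
          Finset.sum_congr rfl fun j _ => h1 j
      _ = _ := by
          rw [← Finset.add_sum_erase Finset.univ _ (Finset.mem_univ k), if_neg (lt_irrefl k)]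
          ring
  · refine Finset.sum_congr rfl fun m hm => ?_
    have hmk : m ≠ k := Finset.ne_of_mem_erase hm
    rw [Finset.sum_eq_single k]
    · by_cases hmlt : m < k
      · rw [if_pos hmlt, if_pos hmlt, dd_ne hmk, dd_self]; ring
      · rw [if_neg hmlt, if_neg hmlt]
    · intro j _ hj
      by_cases hij : m < j
      · rw [if_pos hij, dd_ne hmk, dd_ne hj]; ring
      · rw [if_neg hij]
    · exact fun h => absurd (Finset.mem_univ k) h

lemma hess_diag (hΛ : Λ ≠ 0) {x : Fin N → ℝ} (hx : x ∈ cone N) (k : Fin N) :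
    hess (FBCD N η ζ Λ) k k x
      = (∑ m ∈ Finset.univ.erase k,
          (Real.log ((x k - x m)/Λ) + Real.log ((x k + x m)/Λ) + 3))
        + η * (2*Real.log (x k/Λ) + 3) + ζ * 2 := by
  rw [hess_FBCD hΛ hx k k, sum_diag k, dd_self, Finset.mul_sum]
  congr 1
  · congr 1
    · refine Finset.sum_congr rfl fun m hm => ?_
      have hmk : m ≠ k := Finset.ne_of_mem_erase hm
      rcases lt_or_gt_of_ne hmk with h | h
      · rw [if_neg (asymm h), if_pos h]
        have e1 : (x m - x k)/Λ = -((x k - x m)/Λ) := by ring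
        rw [e1, Real.log_neg_eq_log, show x m + x k = x k + x m from add_comm _ _]
        ring
      · rw [if_pos h, if_neg (asymm h)]
        ring
    · ring
  · ring
end

section
lemma coth_log (u v : ℝ) (hv : 0 < v) (huv : v < u) :
    coth ((Real.log (u + v) - Real.log (u - v)) / 2) = u / v := by
  have hu : 0 < u := hv.trans huv
  have hsub : 0 < u - v := sub_pos.2 huv
  have hadd : 0 < u + v := by linarith
  set t := Real.log (u + v) - Real.log (u - v) with ht
  set s := Real.exp (t/2) with hs
  have hs0 : 0 < s := Real.exp_pos _
  have hs2 : s^2 = (u + v)/(u - v) := by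
    rw [hs, ← Real.exp_nat_mul]
    push_cast
    rw [show (2:ℝ) * (t/2) = t by ring, ht, Real.exp_sub, Real.exp_log hadd, Real.exp_log hsub]
  have hs2gt : 1 < s^2 := by
    rw [hs2, lt_div_iff₀ hsub]; linarith
  have hexpneg : Real.exp (-(t/2)) = s⁻¹ := by rw [Real.exp_neg]
  rw [coth, Real.cosh_eq, Real.sinh_eq, hexpneg]
  rw [← hs]
  have hs20 : s^2 - 1 ≠ 0 := by nlinarith
  have hden : s - s⁻¹ ≠ 0 := by
    intro h
    apply hs20
    have : s * (s - s⁻¹) = s^2 - 1 := by field_simp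
    rw [h, mul_zero] at this
    linarith [this]
  have h1 : (s + s⁻¹) / 2 / ((s - s⁻¹) / 2) = (s^2 + 1)/(s^2 - 1) := by
    rw [div_div_div_cancel_right₀ two_ne_zero, div_eq_div_iff hden hs20]
    field_simp
  rw [h1, hs2]
  have h2 : (u+v)/(u-v) + 1 = (2*u)/(u-v) := by field_simp; ring
  have h3 : (u+v)/(u-v) - 1 = (2*v)/(u-v) := by field_simp; ring
  rw [h2, h3, div_div_div_cancel_right₀ hsub.ne', mul_comm 2 u, mul_comm 2 v,
    mul_div_mul_right _ _ (two_ne_zero)]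

lemma sinh_log (u v : ℝ) (hu : 0 < u) (hv : 0 < v) (huv : u ≠ v) :
    Real.sinh (Real.log (u + v) - Real.log (u - v))
      = 2*u*v / (|u - v| * (u + v)) := by
  have hadd : 0 < u + v := by linarith
  have hw : 0 < |u - v| := abs_pos.2 (sub_ne_zero.2 huv)
  have hexp1 : Real.exp (Real.log (u + v) - Real.log (u - v)) = (u + v)/|u - v| := by
    rw [Real.exp_sub, Real.exp_log hadd, ← Real.log_abs (u - v), Real.exp_log hw]
  have hexp2 : Real.exp (-(Real.log (u + v) - Real.log (u - v))) = |u - v|/(u + v) := by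
    rw [Real.exp_neg, hexp1]
    rw [inv_div]
  rw [Real.sinh_eq, hexp1, hexp2]
  have hsq : |u - v|^2 = (u - v)^2 := sq_abs _
  field_simp
  nlinarith [hsq]
end

section
variable {N : ℕ} {η ζ : ℝ}

lemma hess_off_final (hN : 2 ≤ N) {c : ℝ} {x : Fin N → ℝ} (hx : x ∈ cone N)
    {i0 k : Fin N} (hne : i0 ≠ k) :
    hess (FBCD N η ζ (Real.exp c)) i0 k x
      = Real.log (x i0 + x k) - Real.log (x i0 - x k) := by
  have hΛ : Real.exp c ≠ 0 := Real.exp_ne_zero c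
  have hlogdiv : ∀ u : ℝ, u ≠ 0 → Real.log (u / Real.exp c) = Real.log u - c := by
    intro u hu
    rw [Real.log_div hu hΛ, Real.log_exp]
  rcases lt_or_gt_of_ne hne with h | h
  · have hsub : x i0 - x k ≠ 0 := ne_of_gt (sub_pos.2 (hx.1 h))
    have hadd : x i0 + x k ≠ 0 := ne_of_gt (add_pos (hx.2 i0) (hx.2 k))
    rw [hess_ab hΛ hx h, hlogdiv _ hadd, hlogdiv _ hsub]
    ring
  · have hsub : x k - x i0 ≠ 0 := ne_of_gt (sub_pos.2 (hx.1 h))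
    have hadd : x k + x i0 ≠ 0 := ne_of_gt (add_pos (hx.2 k) (hx.2 i0))
    rw [hess_ba hΛ hx h, hlogdiv _ hadd, hlogdiv _ hsub,
      show x k - x i0 = -(x i0 - x k) by ring, Real.log_neg_eq_log,
      show x k + x i0 = x i0 + x k from add_comm _ _]
    ring

lemma hess_diag_final (hN : 2 ≤ N) (hη : 0 ≤ η) {x : Fin N → ℝ} (hx : x ∈ cone N) (k : Fin N) :
    hess (FBCD N η ζ
        (Real.exp ((6*((N : ℝ) - 1 + η) + 4*ζ) / (4*((N : ℝ) - 1 + η))))) k k x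
      = (∑ m ∈ Finset.univ.erase k, Real.log (|x k - x m| * (x k + x m)))
        + 2*η*Real.log (x k) := by
  set c := (6*((N : ℝ) - 1 + η) + 4*ζ) / (4*((N : ℝ) - 1 + η)) with hc
  have hΛ : Real.exp c ≠ 0 := Real.exp_ne_zero c
  have hN2 : (2:ℝ) ≤ (N:ℝ) := by exact_mod_cast hN
  have hD : 0 < (N : ℝ) - 1 + η := by linarith
  have hlogdiv : ∀ u : ℝ, u ≠ 0 → Real.log (u / Real.exp c) = Real.log u - c := by
    intro u hu
    rw [Real.log_div hu hΛ, Real.log_exp]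
  rw [hess_diag hΛ hx k]
  have hterm : ∀ m ∈ Finset.univ.erase k,
      Real.log ((x k - x m)/Real.exp c) + Real.log ((x k + x m)/Real.exp c) + 3
        = Real.log (|x k - x m| * (x k + x m)) + (3 - 2*c) := by
    intro m hm
    have hmk : m ≠ k := Finset.ne_of_mem_erase hm
    have hsub : x k - x m ≠ 0 :=
      sub_ne_zero.2 fun h => hmk (hx.1.injective h).symm
    have hadd : 0 < x k + x m := add_pos (hx.2 k) (hx.2 m)
    rw [hlogdiv _ hsub, hlogdiv _ (ne_of_gt hadd),
      Real.log_mul (abs_ne_zero.2 hsub) (ne_of_gt hadd), Real.log_abs]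
    ring
  rw [Finset.sum_congr rfl hterm, Finset.sum_add_distrib, Finset.sum_const,
    Finset.card_erase_of_mem (Finset.mem_univ k), Finset.card_univ, Fintype.card_fin,
    hlogdiv _ (ne_of_gt (hx.2 k)), nsmul_eq_mul,
    Nat.cast_sub (show 1 ≤ N by omega), Nat.cast_one]
  have h4 : (4*((N:ℝ) - 1 + η)) ≠ 0 := by positivity
  have hmul : c * (4*((N:ℝ) - 1 + η)) = 6*((N:ℝ) - 1 + η) + 4*ζ := div_mul_cancel₀ _ h4
  have hkey : ((N:ℝ) - 1 + η) * (3 - 2*c) + 2*ζ = 0 := by linear_combination (-(1:ℝ)/2) * hmul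
  linear_combination hkey

lemma exp_hess_diag (hN : 2 ≤ N) (hη : 0 ≤ η) {x : Fin N → ℝ} (hx : x ∈ cone N) (k : Fin N) :
    Real.exp (hess (FBCD N η ζ
        (Real.exp ((6*((N : ℝ) - 1 + η) + 4*ζ) / (4*((N : ℝ) - 1 + η))))) k k x)
      = (∏ m ∈ Finset.univ.erase k, (|x k - x m| * (x k + x m))) * (x k) ^ (2*η) := by
  rw [hess_diag_final hN hη hx k, Real.exp_add, Real.exp_sum]
  congr 1
  · refine Finset.prod_congr rfl fun m hm => ?_
    have hmk : m ≠ k := Finset.ne_of_mem_erase hm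
    have hsub : x k - x m ≠ 0 :=
      sub_ne_zero.2 fun h => hmk (hx.1.injective h).symm
    exact Real.exp_log (mul_pos (abs_pos.2 hsub) (add_pos (hx.2 k) (hx.2 m)))
  · rw [show 2*η*Real.log (x k) = Real.log (x k) * (2*η) by ring,
      ← Real.rpow_def_of_pos (hx.2 k)]
end

/-- for the BCD-type prepotential with
`Λ = e^{(6(N-1+η)+4ζ)/(4(N-1+η))}`, on the cone, the Hessian entries satisfy
`e^{T_ii - T_jj} = coth(T_ij/2)^{2η+N-2} · (∏_{n≠j} sinh T_jn)/(∏_{m≠i} sinh T_im)`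
for all `i < j`, with `coth(T_ij/2) = x_i/x_j > 0`. -/
theorem bcd_diag_relation (N : ℕ) (hN : 2 ≤ N) (η ζ : ℝ) (hη : 0 ≤ η)
    (x : Fin N → ℝ) (hx : x ∈ cone N) (i j : Fin N) (hij : i < j) :
    (coth (hess
        (FBCD N η ζ (Real.exp ((6*((N : ℝ) - 1 + η) + 4*ζ) / (4*((N : ℝ) - 1 + η)))))
        i j x / 2) = x i / x j ∧ (0 : ℝ) < x i / x j) ∧
    Real.exp (hess
        (FBCD N η ζ (Real.exp ((6*((N : ℝ) - 1 + η) + 4*ζ) / (4*((N : ℝ) - 1 + η)))))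
        i i x
      - hess
        (FBCD N η ζ (Real.exp ((6*((N : ℝ) - 1 + η) + 4*ζ) / (4*((N : ℝ) - 1 + η)))))
        j j x) =
      (coth (hess
        (FBCD N η ζ (Real.exp ((6*((N : ℝ) - 1 + η) + 4*ζ) / (4*((N : ℝ) - 1 + η)))))
        i j x / 2)) ^ (2*η + (N : ℝ) - 2) *
      ((∏ n ∈ Finset.univ.erase j, Real.sinh (hess
        (FBCD N η ζ (Real.exp ((6*((N : ℝ) - 1 + η) + 4*ζ) / (4*((N : ℝ) - 1 + η)))))
        j n x)) /
       (∏ m ∈ Finset.univ.erase i, Real.sinh (hess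
        (FBCD N η ζ (Real.exp ((6*((N : ℝ) - 1 + η) + 4*ζ) / (4*((N : ℝ) - 1 + η)))))
        i m x))) := by
  have hxi : 0 < x i := hx.2 i
  have hxj : 0 < x j := hx.2 j
  have hji : x j < x i := hx.1 hij
  have h1 : coth (hess
      (FBCD N η ζ (Real.exp ((6*((N : ℝ) - 1 + η) + 4*ζ) / (4*((N : ℝ) - 1 + η)))))
      i j x / 2) = x i / x j := by
    rw [hess_off_final hN hx hij.ne]
    exact coth_log (x i) (x j) hxj hji
  refine ⟨⟨h1, div_pos hxi hxj⟩, ?_⟩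
  rw [h1, Real.exp_sub, exp_hess_diag hN hη hx i, exp_hess_diag hN hη hx j]
  have hprod : ∀ k : Fin N,
      (∏ n ∈ Finset.univ.erase k, Real.sinh (hess
        (FBCD N η ζ (Real.exp ((6*((N : ℝ) - 1 + η) + 4*ζ) / (4*((N : ℝ) - 1 + η)))))
        k n x))
      = ∏ n ∈ Finset.univ.erase k, (2*(x k)*(x n) / (|x k - x n| * (x k + x n))) := by
    intro k
    refine Finset.prod_congr rfl fun n hn => ?_
    have hnk : n ≠ k := Finset.ne_of_mem_erase hn
    have hxne : x k ≠ x n := fun h => hnk (hx.1.injective h).symm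
    rw [hess_off_final hN hx hnk.symm]
    exact sinh_log (x k) (x n) (hx.2 k) (hx.2 n) hxne
  rw [hprod i, hprod j]
  -- algebra
  have hM : ∀ k : Fin N, (∏ n ∈ Finset.univ.erase k, (2*(x k)*(x n)))
      = (2*(x k))^(N-1) * ∏ n ∈ Finset.univ.erase k, x n := by
    intro k
    rw [Finset.prod_mul_distrib, Finset.prod_const,
      Finset.card_erase_of_mem (Finset.mem_univ k), Finset.card_univ, Fintype.card_fin]
  rw [Finset.prod_div_distrib, Finset.prod_div_distrib, hM i, hM j]
  set Bi := ∏ m ∈ Finset.univ.erase i, (|x i - x m| * (x i + x m)) with hBi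
  set Bj := ∏ m ∈ Finset.univ.erase j, (|x j - x m| * (x j + x m)) with hBj
  set Pi' := ∏ m ∈ Finset.univ.erase i, x m with hPi
  set Pj' := ∏ n ∈ Finset.univ.erase j, x n with hPj
  have hBipos : 0 < Bi := Finset.prod_pos fun m hm => by
    have hmk : m ≠ i := Finset.ne_of_mem_erase hm
    exact mul_pos (abs_pos.2 (sub_ne_zero.2 fun h => hmk (hx.1.injective h).symm))
      (add_pos (hx.2 i) (hx.2 m))
  have hBjpos : 0 < Bj := Finset.prod_pos fun m hm => by
    have hmk : m ≠ j := Finset.ne_of_mem_erase hm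
    exact mul_pos (abs_pos.2 (sub_ne_zero.2 fun h => hmk (hx.1.injective h).symm))
      (add_pos (hx.2 j) (hx.2 m))
  have hPipos : 0 < Pi' := Finset.prod_pos fun m _ => hx.2 m
  have hPjpos : 0 < Pj' := Finset.prod_pos fun m _ => hx.2 m
  have hPP : x i * Pi' = x j * Pj' := by
    rw [hPi, hPj, Finset.mul_prod_erase _ _ (Finset.mem_univ i),
      Finset.mul_prod_erase _ _ (Finset.mem_univ j)]
  have hPj2 : Pj' = x i * Pi' / x j := by
    rw [eq_div_iff hxj.ne']
    linarith [hPP]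
  -- exponent splitting
  have hrpow : (x i / x j) ^ (2*η + (N : ℝ) - 2)
      = ((x i) ^ (2*η) / (x j) ^ (2*η)) * (x i / x j) ^ (N - 2 : ℕ) := by
    rw [show 2*η + (N:ℝ) - 2 = 2*η + ((N:ℝ) - 2) by ring,
      Real.rpow_add (div_pos hxi hxj),
      show ((N:ℝ) - 2) = ((N - 2 : ℕ) : ℝ) by rw [Nat.cast_sub hN]; norm_num,
      Real.rpow_natCast, Real.div_rpow hxi.le hxj.le]
  rw [hrpow]
  have hn1 : N - 1 = (N - 2) + 1 := by omega
  rw [hn1, hPj2]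
  have hxipow : (0:ℝ) < (x i) ^ (2*η) := Real.rpow_pos_of_pos hxi _
  have hxjpow : (0:ℝ) < (x j) ^ (2*η) := Real.rpow_pos_of_pos hxj _
  rw [div_pow]
  field_simp
  ring
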